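/- Let L₁, L₂ be positive integers, J > 0, h > 0, and suppose h < 2J/L₁ + 2J/L₂. Then for every finite nonempty set V ⊂ ℤ² one has 2J·|∂V| + 2Σ_{t∈V} h(t) ≥ (2J − h·L₁L₂/(L₁+L₂))·|∂V| and 2J·|∂V| − 2Σ_{t∈V} h(t) ≥ (2J − h·L₁L₂/(L₁+L₂))·|∂V|, where 2J − h·L₁L₂/(L₁+L₂) > 0. In particular, the constant configurations σ⁺ ≡ +1 and σ⁻ ≡ −1 are ground states of the cell-board Ising Hamiltonian and satisfy the Peierls condition with Peierls constant c_P = 2J − h·L₁L₂/(L₁+L₂). -/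

import Mathlib

/-!
In cell coordinates the field factorises: `ε(t) = ε₁(t₁) ε₂(t₂)` with `ε_L(n) = (-1)^⌊n/L⌋`.
The zigzag `G_L(n) = ε_L(n) (2 (n mod L) - L)` stays in `[-L, L]` and satisfies
`G_L(n+1) - G_L(n) = 2 ε_L(n)`, so `2ε` is the discrete derivative in direction `(1,0)` of the
bounded function `ε₂(t₂) G_{L₁}(t₁)`. Summed over `V` it telescopes to boundary terms, giving
`|2 Σ_V ε| ≤ L₁ |∂ʰV|`, and likewise `|2 Σ_V ε| ≤ L₂ |∂ᵛV|`. Weighting the two bounds by `L₂` and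
`L₁` yields `|2 Σ_V ε| ≤ L₁L₂/(L₁+L₂) |∂V|`, which is exactly what the field can take away from
the `2J |∂V|` paid by the couplings.
-/

/-- Sign of the cell-board external field: `+1` on sites whose cell-coordinates
`⌊t₁/L₁⌋ + ⌊t₂/L₂⌋` (floor division) sum to an even number, and `-1` otherwise. -/
noncomputable def cellSign (L1 L2 : ℕ) (t : ℤ × ℤ) : ℝ :=
  if Even (Int.fdiv t.1 (L1 : ℤ) + Int.fdiv t.2 (L2 : ℤ)) then 1 else -1

/-- The cell-board external field with amplitude `h`. -/
noncomputable def cellField (L1 L2 : ℕ) (h : ℝ) (t : ℤ × ℤ) : ℝ :=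
  h * cellSign L1 L2 t

/-- Boundary edges of a finite set `V ⊂ ℤ²` in the direction `e`: the edge `{u, u+e}`
belongs to the boundary iff exactly one of its endpoints lies in `V`.  An edge is
represented by its base point `u`. -/
def bdry (V : Finset (ℤ × ℤ)) (e : ℤ × ℤ) : Finset (ℤ × ℤ)  :=
  (V ∪ V.image (fun u => u - e)).filter (fun u => ¬ ((u ∈ V) ↔ (u + e ∈ V)))

/-- Total number of boundary edges `|∂V| = |∂ʰV| + |∂ᵛV|`. -/
def bdryCard (V : Finset (ℤ × ℤ)) : ℕ :=
  (bdry V (1, 0)).card + (bdry V (0, 1)).card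

open Finset

section Telescoping

variable {G M : Type*} [AddGroup G] [DecidableEq G]

lemma mem_image_sub_right_iff (V : Finset G) (e u : G) : u ∈ V.image (· - e) ↔ u + e ∈ V :=
  ⟨fun h => by obtain ⟨v, hv, rfl⟩ := mem_image.1 h; simpa using hv,
    fun h => mem_image.2 ⟨u + e, h, add_sub_cancel_right u e⟩⟩

lemma sum_comp_add_sub_sum [AddCommGroup M] (V : Finset G) (e : G) (g : G → M) :
    ∑ t ∈ V, g (t + e) - ∑ t ∈ V, g t =
      ∑ u ∈ V \ V.image (· - e), g (u + e) - ∑ u ∈ V.image (· - e) \ V, g (u + e) := by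
  have hshift : ∑ t ∈ V, g t = ∑ u ∈ V.image (· - e), g (u + e) := by
    rw [sum_image fun x _ y _ hxy => sub_left_injective hxy]
    simp
  rw [hshift, sum_sdiff_sub_sum_sdiff]

end Telescoping

lemma bdry_eq_sdiff_union_sdiff (V : Finset (ℤ × ℤ)) (e : ℤ × ℤ) :
    bdry V e = V \ V.image (· - e) ∪ V.image (· - e) \ V := by
  ext u
  simp only [bdry, mem_filter, mem_union, mem_sdiff, mem_image_sub_right_iff]
  tauto

lemma abs_sum_comp_add_sub_sum_le (V : Finset (ℤ × ℤ)) (e : ℤ × ℤ) {g : ℤ × ℤ → ℝ} {C : ℝ}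
    (hg : ∀ u, |g u| ≤ C) :
    |∑ t ∈ V, g (t + e) - ∑ t ∈ V, g t| ≤ C * #(bdry V e) := by
  set W := V.image (· - e)
  have hdisj : Disjoint (V \ W) (W \ V) := disjoint_sdiff_sdiff
  calc |∑ t ∈ V, g (t + e) - ∑ t ∈ V, g t|
      = |∑ u ∈ V \ W, g (u + e) - ∑ u ∈ W \ V, g (u + e)| := by rw [sum_comp_add_sub_sum]
    _ ≤ ∑ u ∈ V \ W, |g (u + e)| + ∑ u ∈ W \ V, |g (u + e)| :=
        (abs_sub _ _).trans (add_le_add (abs_sum_le_sum_abs _ _) (abs_sum_le_sum_abs _ _))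
    _ = ∑ u ∈ bdry V e, |g (u + e)| := by rw [bdry_eq_sdiff_union_sdiff, sum_union hdisj]
    _ ≤ #(bdry V e) • C := sum_le_card_nsmul _ _ _ fun u _ => hg (u + e)
    _ = C * #(bdry V e) := by rw [nsmul_eq_mul, mul_comm]

def stripeSign (L : ℕ) (n : ℤ) : ℝ := if Even (n / (L : ℤ)) then 1 else -1

def stripePotential (L : ℕ) (n : ℤ) : ℝ := stripeSign L n * (2 * (n % L : ℤ) - L)

section Stripes

variable {L : ℕ}

lemma abs_stripeSign (n : ℤ) : |stripeSign L n| = 1 := by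
  unfold stripeSign; split_ifs <;> simp

lemma abs_stripePotential_le (hL : 0 < L) (n : ℤ) : |stripePotential L n| ≤ L := by
  have hr0 : (0 : ℝ) ≤ (n % L : ℤ) := by exact_mod_cast Int.emod_nonneg _ (by omega)
  have hrL : ((n % L : ℤ) : ℝ) + 1 ≤ L := by exact_mod_cast Int.emod_lt_of_pos n (by omega)
  rw [stripePotential, abs_mul, abs_stripeSign, one_mul, abs_le]
  constructor <;> linarith

lemma stripePotential_succ_sub (hL : 0 < L) (n : ℤ) :
    stripePotential L (n + 1) - stripePotential L n = 2 * stripeSign L n := by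
  have hL' : (0 : ℤ) < L := by exact_mod_cast hL
  unfold stripePotential stripeSign
  set q := n / (L : ℤ)
  set r := n % (L : ℤ)
  have hdiv : r + L * q = n := Int.emod_add_mul_ediv n L
  have hr : 0 ≤ r ∧ r < L := ⟨Int.emod_nonneg _ hL'.ne', Int.emod_lt_of_pos _ hL'⟩
  rcases lt_or_eq_of_le (show r + 1 ≤ L by omega) with hlt | hwrap
  · obtain ⟨hq, hr'⟩ := (Int.ediv_emod_unique hL').2
      ⟨(by linarith : r + 1 + L * q = n + 1), by omega, hlt⟩
    rw [hq, hr']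
    split_ifs <;> push_cast <;> ring
  · obtain ⟨hq, hr'⟩ := (Int.ediv_emod_unique hL').2
      ⟨(by linarith : 0 + L * (q + 1) = n + 1), le_rfl, hL'⟩
    have hwrap' : (r : ℝ) + 1 = L := by exact_mod_cast hwrap
    rw [hq, hr']
    simp only [Int.even_add_one]
    split_ifs <;> push_cast <;> linarith

end Stripes

lemma cellSign_eq_mul (L1 L2 : ℕ) (t : ℤ × ℤ) :
    cellSign L1 L2 t = stripeSign L1 t.1 * stripeSign L2 t.2 := by
  rw [cellSign, stripeSign, stripeSign, Int.fdiv_eq_ediv_of_nonneg _ (by positivity),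
    Int.fdiv_eq_ediv_of_nonneg _ (by positivity)]
  simp only [Int.even_add]
  by_cases h1 : Even (t.1 / (L1 : ℤ)) <;> by_cases h2 : Even (t.2 / (L2 : ℤ)) <;> simp [h1, h2]

section CellBoard

variable {L1 L2 : ℕ}

lemma abs_two_mul_sum_cellSign_le_fst (hL1 : 0 < L1) (V : Finset (ℤ × ℤ)) :
    |2 * ∑ t ∈ V, cellSign L1 L2 t| ≤ L1 * #(bdry V (1, 0)) := by
  have hstep : ∀ t : ℤ × ℤ, 2 * cellSign L1 L2 t =
      stripeSign L2 (t + (1, 0)).2 * stripePotential L1 (t + (1, 0)).1 -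
        stripeSign L2 t.2 * stripePotential L1 t.1 := fun t => by
    rw [Prod.fst_add, Prod.snd_add, add_zero, ← mul_sub, stripePotential_succ_sub hL1,
      cellSign_eq_mul]
    ring
  rw [mul_sum, sum_congr rfl fun t _ => hstep t, sum_sub_distrib]
  refine abs_sum_comp_add_sub_sum_le V (1, 0)
    (g := fun u => stripeSign L2 u.2 * stripePotential L1 u.1) fun u => ?_
  rw [abs_mul, abs_stripeSign, one_mul]
  exact abs_stripePotential_le hL1 _

lemma abs_two_mul_sum_cellSign_le_snd (hL2 : 0 < L2) (V : Finset (ℤ × ℤ)) :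
    |2 * ∑ t ∈ V, cellSign L1 L2 t| ≤ L2 * #(bdry V (0, 1)) := by
  have hstep : ∀ t : ℤ × ℤ, 2 * cellSign L1 L2 t =
      stripeSign L1 (t + (0, 1)).1 * stripePotential L2 (t + (0, 1)).2 -
        stripeSign L1 t.1 * stripePotential L2 t.2 := fun t => by
    rw [Prod.fst_add, Prod.snd_add, add_zero, ← mul_sub, stripePotential_succ_sub hL2,
      cellSign_eq_mul]
    ring
  rw [mul_sum, sum_congr rfl fun t _ => hstep t, sum_sub_distrib]
  refine abs_sum_comp_add_sub_sum_le V (0, 1)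
    (g := fun u => stripeSign L1 u.1 * stripePotential L2 u.2) fun u => ?_
  rw [abs_mul, abs_stripeSign, one_mul]
  exact abs_stripePotential_le hL2 _

lemma le_mul_div_add_mul_add {x a b p q : ℝ} (hp : 0 < p) (hq : 0 < q) (ha : x ≤ p * a)
    (hb : x ≤ q * b) : x ≤ p * q / (p + q) * (a + b) := by
  rw [div_mul_eq_mul_div, le_div_iff₀ (by positivity)]
  nlinarith [mul_le_mul_of_nonneg_left ha hq.le, mul_le_mul_of_nonneg_left hb hp.le]

lemma abs_two_mul_sum_cellSign_le (hL1 : 0 < L1) (hL2 : 0 < L2) (V : Finset (ℤ × ℤ)) :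
    |2 * ∑ t ∈ V, cellSign L1 L2 t| ≤ L1 * L2 / (L1 + L2) * bdryCard V := by
  rw [bdryCard, Nat.cast_add]
  exact le_mul_div_add_mul_add (by positivity) (by positivity)
    (abs_two_mul_sum_cellSign_le_fst hL1 V) (abs_two_mul_sum_cellSign_le_snd hL2 V)

end CellBoard

theorem peierls_condition_cellBoard_general (L1 L2 : ℕ) (hL1 : 0 < L1) (hL2 : 0 < L2)
    (J h : ℝ) (hh : 0 < h)
    (hcond : h < 2 * J / (L1 : ℝ) + 2 * J / (L2 : ℝ)) :
    0 < 2 * J - h * (L1 : ℝ) * (L2 : ℝ) / ((L1 : ℝ) + (L2 : ℝ)) ∧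
    ∀ V : Finset (ℤ × ℤ), V.Nonempty →
      2 * J * (bdryCard V : ℝ) + 2 * ∑ t ∈ V, cellField L1 L2 h t ≥
        (2 * J - h * (L1 : ℝ) * (L2 : ℝ) / ((L1 : ℝ) + (L2 : ℝ))) * (bdryCard V : ℝ) ∧
      2 * J * (bdryCard V : ℝ) - 2 * ∑ t ∈ V, cellField L1 L2 h t ≥
        (2 * J - h * (L1 : ℝ) * (L2 : ℝ) / ((L1 : ℝ) + (L2 : ℝ))) * (bdryCard V : ℝ) := by
  have hL1' : (0 : ℝ) < L1 := by exact_mod_cast hL1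
  have hL2' : (0 : ℝ) < L2 := by exact_mod_cast hL2
  refine ⟨?_, fun V _ => ?_⟩
  · have hharm : (2 * J / L1 + 2 * J / L2) * (L1 * L2) = 2 * J * (L1 + L2) := by
      field_simp
      ring
    have hscaled := mul_lt_mul_of_pos_right hcond (mul_pos hL1' hL2')
    rw [hharm] at hscaled
    rw [sub_pos, div_lt_iff₀ (by positivity)]
    linarith
  · have hsum : ∑ t ∈ V, cellField L1 L2 h t = h * ∑ t ∈ V, cellSign L1 L2 t := by
      simp only [cellField, mul_sum]
    obtain ⟨hlo, hhi⟩ := abs_le.1 (abs_two_mul_sum_cellSign_le hL1 hL2 V)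
    have hlo' := mul_le_mul_of_nonneg_left hlo hh.le
    have hhi' := mul_le_mul_of_nonneg_left hhi hh.le
    rw [hsum, mul_assoc h, mul_div_assoc h]
    constructor <;> linarith

/-- if `h < 2J/L₁ + 2J/L₂` then the Peierls constant
`c_P = 2J − h·L₁L₂/(L₁+L₂)` is positive and for every finite nonempty `V ⊂ ℤ²` the
energy cost of flipping the constant configurations `σ⁺ ≡ +1` or `σ⁻ ≡ −1` on `V`,
namely `2J·|∂V| ± 2Σ_{t∈V} h(t)`, is at least `c_P·|∂V|`; i.e. `σ⁺` and `σ⁻` are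
ground states satisfying the Peierls condition with Peierls constant `c_P`. -/
theorem peierls_condition_cellBoard (L1 L2 : ℕ) (hL1 : 0 < L1) (hL2 : 0 < L2)
    (J h : ℝ) (hJ : 0 < J) (hh : 0 < h)
    (hcond : h < 2 * J / (L1 : ℝ) + 2 * J / (L2 : ℝ)) :
    0 < 2 * J - h * (L1 : ℝ) * (L2 : ℝ) / ((L1 : ℝ) + (L2 : ℝ)) ∧
    ∀ V : Finset (ℤ × ℤ), V.Nonempty →
      2 * J * (bdryCard V : ℝ) + 2 * ∑ t ∈ V, cellField L1 L2 h t ≥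
        (2 * J - h * (L1 : ℝ) * (L2 : ℝ) / ((L1 : ℝ) + (L2 : ℝ))) * (bdryCard V : ℝ) ∧
      2 * J * (bdryCard V : ℝ) - 2 * ∑ t ∈ V, cellField L1 L2 h t ≥
        (2 * J - h * (L1 : ℝ) * (L2 : ℝ) / ((L1 : ℝ) + (L2 : ℝ))) * (bdryCard V : ℝ) :=
  peierls_condition_cellBoard_general L1 L2 hL1 hL2 J h hh hcond
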